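/- arXiv:2212.08928 — 2 statements merged into one kernel-verified Lean document; each statement's English description precedes it below -/
import Mathlib

section
/- In Ãₙ, the elements pᵢ = a_{i+1}⋯a_{i−1} satisfy pᵢpⱼ = p_{j+1}p_{i−1} for all 1 ≤ i, j ≤ n+1 (indices mod n+1). -/
open CoxeterMatrix

/-- The affine Coxeter matrix of type Ãₙ on the cyclic index set `ZMod (n+1)`:
`aᵢ² = 1`, `(aᵢa_{i+1})³ = 1`, and non-adjacent generators (mod n+1) commute. -/
def affineA (n : ℕ) : CoxeterMatrix (ZMod (n + 1)) where
  M := fun i j => if i = j then 1 else if i = j + 1 ∨ j = i + 1 then 3 else 2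
  isSymm := by
    ext i j
    by_cases h : i = j
    · simp [Matrix.transpose, Matrix.of_apply, h]
    · simp only [Matrix.transpose, Matrix.of_apply]
      rw [if_neg h, if_neg (Ne.symm h)]
      exact if_congr or_comm rfl rfl
  diagonal := fun i => by simp
  off_diagonal := fun i j h => by
    simp only [if_neg h]
    split <;> simp

/-- The Coxeter generators `aᵢ` of `Ãₙ`. -/
def aa (n : ℕ) (i : ZMod (n + 1)) : (affineA n).Group := (affineA n).simple i

/-- The cyclic products `pⱼ = a_{j+1} a_{j+2} ⋯ a_{j-1}` (indices mod `n+1`). -/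
def pp (n : ℕ) (j : ZMod (n + 1)) : (affineA n).Group :=
  ((List.range n).map fun k => aa n (j + 1 + (k : ℕ))).prod

/-- `gⱼ = pⱼ⁻¹ p_{j+1}`. -/
def gg (n : ℕ) (j : ZMod (n + 1)) : (affineA n).Group := (pp n j)⁻¹ * pp n (j + 1)

/-- The subgroup `N = ⟨pⱼ⁻¹pᵢ : i, j⟩` of `Ãₙ`. -/
def NN (n : ℕ) : Subgroup (affineA n).Group :=
  Subgroup.closure {x | ∃ i j : ZMod (n + 1), x = (pp n j)⁻¹ * pp n i}

/-- The standard parabolic subgroup `⟨a₁,…,aₙ⟩` of `Ãₙ` (all generators except `a_{n+1} = a₀`). -/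
def parab (n : ℕ) : Subgroup (affineA n).Group :=
  Subgroup.closure {x | ∃ i : ZMod (n + 1), i ≠ 0 ∧ x = aa n i}

/-!
Write `pᵢ = b₀ b₁ ⋯ b_{n-1}` with `b_k = a_{i+1+k}`. The `b_k` satisfy the braid relations of
type `A`, so conjugation by `pᵢ` sends `aⱼ` to `a_{j+1}` for `j ≠ i, i - 1`, and conjugation by
`pᵢ²` sends `a_{i-1}` to `a_{i+1}`. Together with `pⱼ aⱼ = a_{j+1} p_{j+1}`, the second fact is
the case `pᵢ pᵢ = p_{i+1} p_{i-1}`, i.e. `j = i - 2`, and the first one passes from `j + 1` to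
`j`. This reaches every `j` except `j = i - 1`, where the identity is trivial.
-/

section TypeAChain

variable {G : Type*} [Group G]

structure IsTypeAChain (b : ℕ → G) (N : ℕ) : Prop where
  braid : ∀ k, k + 1 < N → b k * b (k + 1) * b k = b (k + 1) * b k * b (k + 1)
  commute : ∀ k l, k + 2 ≤ l → l < N → Commute (b k) (b l)

def chainProd (b : ℕ → G) (M : ℕ) : G := ((List.range M).map b).prod

lemma chainProd_succ (b : ℕ → G) (M : ℕ) : chainProd b (M + 1) = chainProd b M * b M := by
  simp [chainProd, List.range_succ]

lemma chainProd_succ' (b : ℕ → G) (M : ℕ) :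
    chainProd b (M + 1) = b 0 * chainProd (fun k => b (k + 1)) M := by
  simp [chainProd, List.range_succ_eq_map, Function.comp_def]

namespace IsTypeAChain

variable {b : ℕ → G} {N : ℕ}

lemma commute_chainProd (hb : IsTypeAChain b N) {m M : ℕ} (hM : M + 1 ≤ m) (hm : m < N) :
    Commute (b m) (chainProd b M) :=
  Commute.list_prod_right _ _ fun x hx => by
    obtain ⟨l, hl, rfl⟩ := List.mem_map.1 hx
    exact (hb.commute l m (by simp at hl; omega) hm).symm

lemma chainProd_mul (hb : IsTypeAChain b N) {M k : ℕ} (hM : M ≤ N) (hk : k + 1 < M) :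
    chainProd b M * b k = b (k + 1) * chainProd b M := by
  induction M with
  | zero => omega
  | succ M ih =>
    obtain hk | rfl := (show k + 1 < M ∨ k + 1 = M by omega)
    · rw [chainProd_succ, mul_assoc, ← (hb.commute k M (by omega) (by omega)).eq, ← mul_assoc,
        ih (by omega) hk, mul_assoc]
    · calc chainProd b (k + 1 + 1) * b k = chainProd b k * (b k * b (k + 1) * b k) := by
            simp only [chainProd_succ, mul_assoc]
        _ = chainProd b k * (b (k + 1) * b k * b (k + 1)) := by rw [hb.braid k (by omega)]
        _ = b (k + 1) * chainProd b (k + 1 + 1) := by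
            rw [← mul_assoc, ← mul_assoc, ← (hb.commute_chainProd le_rfl (by omega)).eq]
            simp only [chainProd_succ, mul_assoc]

/-- For involutive `b`, this says that conjugation by `(chainProd b (M + 1)) ^ 2` sends `b M`
to `b 0`. -/
lemma head_mul_chainProd_mul_chainProd (hb : IsTypeAChain b N) {M : ℕ} (hM : M < N) :
    b 0 * (chainProd b M * b M * chainProd b M) = chainProd b M * b M * chainProd b M * b M := by
  induction M with
  | zero => simp [chainProd]
  | succ M ih =>
    set Q := chainProd b M * b M * chainProd b M
    have hQ : chainProd b (M + 1) * b (M + 1) * chainProd b (M + 1) = Q * (b (M + 1) * b M) := by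
      simp only [Q, chainProd_succ, mul_assoc, (hb.commute_chainProd le_rfl hM).left_comm]
    calc b 0 * (chainProd b (M + 1) * b (M + 1) * chainProd b (M + 1))
        = b 0 * Q * (b (M + 1) * b M) := by rw [hQ, ← mul_assoc]
      _ = Q * (b M * b (M + 1) * b M) := by rw [ih (by omega)]; simp only [mul_assoc]
      _ = Q * (b (M + 1) * b M * b (M + 1)) := by rw [hb.braid M hM]
      _ = chainProd b (M + 1) * b (M + 1) * chainProd b (M + 1) * b (M + 1) := by
        rw [hQ]; simp only [mul_assoc]

end IsTypeAChain

end TypeAChain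

lemma ZMod.natCast_self_eq_neg_one (n : ℕ) : (n : ZMod (n + 1)) = -1 :=
  eq_neg_of_add_eq_zero_left (ZMod.natCast_self' n)

lemma ZMod.natCast_inj_of_lt {m a b : ℕ} (ha : a < m) (hb : b < m) :
    (a : ZMod m) = b ↔ a = b := by
  rw [ZMod.natCast_eq_natCast_iff', Nat.mod_eq_of_lt ha, Nat.mod_eq_of_lt hb]

lemma aa_mul_self (n : ℕ) (i : ZMod (n + 1)) : aa n i * aa n i = 1 :=
  (affineA n).toCoxeterSystem.simple_mul_simple_self i

lemma aa_mul_aa_cancel_left (n : ℕ) (i : ZMod (n + 1)) (g : (affineA n).Group) :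
    aa n i * (aa n i * g) = g :=
  (affineA n).toCoxeterSystem.simple_mul_simple_cancel_left i

lemma aa_braid {n : ℕ} {i : ZMod (n + 1)} (h : i ≠ i + 1) :
    aa n i * aa n (i + 1) * aa n i = aa n (i + 1) * aa n i * aa n (i + 1) := by
  have hM : affineA n i (i + 1) = 3 := by simp [affineA, h]
  have hM' : affineA n (i + 1) i = 3 := by simp [affineA, h.symm]
  have := (affineA n).toCoxeterSystem.wordProd_braidWord_eq i (i + 1)
  rw [CoxeterSystem.braidWord, CoxeterSystem.braidWord, hM, hM'] at this
  simpa [CoxeterSystem.alternatingWord, CoxeterSystem.wordProd, aa, mul_assoc] using this.symm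

lemma aa_commute {n : ℕ} {i j : ZMod (n + 1)} (h : i ≠ j) (h₁ : i ≠ j + 1) (h₂ : j ≠ i + 1) :
    Commute (aa n i) (aa n j) := by
  have hM : affineA n i j = 2 := by simp [affineA, h, h₁, h₂]
  have hM' : affineA n j i = 2 := by rw [(affineA n).symmetric, hM]
  have := (affineA n).toCoxeterSystem.wordProd_braidWord_eq i j
  rw [CoxeterSystem.braidWord, CoxeterSystem.braidWord, hM, hM'] at this
  simpa [CoxeterSystem.alternatingWord, CoxeterSystem.wordProd, aa, commute_iff_eq] using this

lemma isTypeAChain_aa (n : ℕ) (x : ZMod (n + 1)) :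
    IsTypeAChain (fun k : ℕ => aa n (x + k)) n := by
  have hne : ∀ a b : ℕ, a < n + 1 → b < n + 1 → a ≠ b → x + a ≠ x + (b : ZMod (n + 1)) :=
    fun a b ha hb hab h => hab ((ZMod.natCast_inj_of_lt ha hb).1 (add_left_cancel h))
  refine ⟨fun k hk => ?_, fun k l hkl hl => ?_⟩
  · have h : x + k ≠ x + k + 1 := by
      simpa [add_assoc] using hne k (k + 1) (by omega) (by omega) (by omega)
    simpa [add_assoc] using aa_braid h
  · refine aa_commute (hne k l (by omega) (by omega) (by omega)) ?_ ?_
    · simpa [add_assoc] using hne k (l + 1) (by omega) (by omega) (by omega)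
    · simpa [add_assoc] using hne l (k + 1) (by omega) (by omega) (by omega)

lemma pp_eq_chainProd (n : ℕ) (j : ZMod (n + 1)) :
    pp n j = chainProd (fun k : ℕ => aa n (j + 1 + k)) n := rfl

lemma pp_mul_aa_self (n : ℕ) (j : ZMod (n + 1)) :
    pp n j * aa n j = aa n (j + 1) * pp n (j + 1) := by
  calc pp n j * aa n j = chainProd (fun k : ℕ => aa n (j + 1 + k)) (n + 1) := by
        rw [chainProd_succ, ZMod.natCast_self_eq_neg_one, add_neg_cancel_right, pp_eq_chainProd]
    _ = aa n (j + 1) * pp n (j + 1) := by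
        rw [chainProd_succ', pp_eq_chainProd]
        simp only [Nat.cast_add, Nat.cast_one, Nat.cast_zero, add_zero]
        congr! 4 with k
        ring

lemma pp_mul_aa {n : ℕ} {i j : ZMod (n + 1)} (h₁ : j ≠ i) (h₂ : j ≠ i - 1) :
    pp n i * aa n j = aa n (j + 1) * pp n i := by
  obtain ⟨k, hk, rfl⟩ : ∃ k : ℕ, k + 1 < n ∧ j = i + 1 + k := by
    set k := (j - (i + 1)).val
    have hk : (k : ZMod (n + 1)) = j - (i + 1) := ZMod.natCast_zmod_val _
    refine ⟨k, ?_, by rw [hk]; ring⟩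
    obtain hlt | heq | heq : k + 1 < n ∨ k = n ∨ k + 1 = n := by
      have := ZMod.val_lt (j - (i + 1)); omega
    · exact hlt
    · rw [heq, ZMod.natCast_self_eq_neg_one] at hk
      exact absurd (by linear_combination -hk) h₁
    · have hk' : ((k + 1 : ℕ) : ZMod (n + 1)) = -1 := by
        rw [heq]; exact ZMod.natCast_self_eq_neg_one n
      exact absurd (by push_cast at hk'; linear_combination hk' - hk) h₂
  simpa [pp_eq_chainProd, add_assoc] using (isTypeAChain_aa n (i + 1)).chainProd_mul le_rfl hk

lemma pp_mul_pp_self (n : ℕ) (m : ZMod (n + 1)) :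
    pp n m * pp n m = pp n (m + 1) * pp n (m - 1) := by
  obtain _ | N := n
  · simp [pp]
  set P := chainProd (fun k : ℕ => aa (N + 1) (m + 1 + k)) N
  have hN : (N : ZMod (N + 1 + 1)) = -2 := by
    have := ZMod.natCast_self_eq_neg_one (N + 1)
    push_cast at this
    linear_combination this
  have hp : pp (N + 1) m = P * aa (N + 1) (m - 1) := by
    rw [pp_eq_chainProd, chainProd_succ, hN, show m + 1 + -2 = m - 1 by ring]
  have hT := (isTypeAChain_aa (N + 1) (m + 1)).head_mul_chainProd_mul_chainProd (M := N) (by omega)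
  simp only [Nat.cast_zero, add_zero, hN, show m + 1 + -2 = m - 1 by ring] at hT
  have hshift := pp_mul_aa_self (N + 1) m
  have hshift' := pp_mul_aa_self (N + 1) (m - 1)
  rw [sub_add_cancel] at hshift'
  calc pp (N + 1) m * pp (N + 1) m = P * aa (N + 1) (m - 1) * P * aa (N + 1) (m - 1) := by
        rw [hp, ← mul_assoc]
    _ = aa (N + 1) (m + 1) * (P * aa (N + 1) (m - 1) * P) := hT.symm
    _ = aa (N + 1) (m + 1) * (pp (N + 1) m * aa (N + 1) m) * (aa (N + 1) m * pp (N + 1) m)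
          * aa (N + 1) (m - 1) := by
        simp only [hp, mul_assoc, aa_mul_aa_cancel_left, aa_mul_self, mul_one]
    _ = pp (N + 1) (m + 1) * pp (N + 1) (m - 1) := by
        rw [hshift, ← hshift']; simp only [mul_assoc, aa_mul_aa_cancel_left, aa_mul_self, mul_one]

lemma pp_mul_pp_of_add_one {n : ℕ} {i j : ZMod (n + 1)} (h₁ : j ≠ i - 1) (h₂ : j ≠ i - 2)
    (ih : pp n i * pp n (j + 1) = pp n (j + 1 + 1) * pp n (i - 1)) :
    pp n i * pp n j = pp n (j + 1) * pp n (i - 1) := by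
  have hj : pp n j = aa n (j + 1) * pp n (j + 1) * aa n j := by
    rw [← pp_mul_aa_self, mul_assoc, aa_mul_self, mul_one]
  calc pp n i * pp n j = pp n i * aa n (j + 1) * pp n (j + 1) * aa n j := by
        rw [hj]; simp only [mul_assoc]
    _ = aa n (j + 1 + 1) * (pp n i * pp n (j + 1)) * aa n j := by
        rw [pp_mul_aa (fun h => h₁ (by linear_combination h))
          (fun h => h₂ (by linear_combination h))]
        simp only [mul_assoc]
    _ = pp n (j + 1) * aa n (j + 1) * pp n (i - 1) * aa n j := by
        rw [ih, pp_mul_aa_self]; simp only [mul_assoc]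
    _ = pp n (j + 1) * pp n (i - 1) := by
        rw [mul_assoc _ (aa n (j + 1)), ← pp_mul_aa h₁ (fun h => h₂ (by linear_combination h)),
          mul_assoc, mul_assoc, aa_mul_self, mul_one]

lemma pp_mul_pp_sub {n s : ℕ} (hs : s < n) (i : ZMod (n + 1)) :
    pp n i * pp n (i - (s + 2)) = pp n (i - (s + 2) + 1) * pp n (i - 1) := by
  have hne : ∀ a : ℕ, 0 < a → a < n + 1 → (a : ZMod (n + 1)) ≠ 0 := fun a ha han h =>
    Nat.not_dvd_of_pos_of_lt ha han ((ZMod.natCast_eq_zero_iff _ _).1 h)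
  induction s with
  | zero => convert (pp_mul_pp_self n (i - 1)).symm using 3 <;> ring
  | succ s ih =>
    refine pp_mul_pp_of_add_one (fun h => hne (s + 2) (by omega) (by omega) ?_)
      (fun h => hne (s + 1) (by omega) (by omega) ?_) ?_
    · push_cast at h ⊢; linear_combination -h
    · push_cast at h ⊢; linear_combination -h
    · rw [show i - (((s + 1 : ℕ) : ZMod (n + 1)) + 2) + 1 = i - (s + 2) by push_cast; ring]
      exact ih (by omega)

theorem stmt6_general (n : ℕ) (i j : ZMod (n + 1)) :
    pp n i * pp n j = pp n (j + 1) * pp n (i - 1) := by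
  obtain ⟨s, hs, hsn⟩ : ∃ s : ℕ, (s : ZMod (n + 1)) = i - j - 2 ∧ s < n + 1 :=
    ⟨_, ZMod.natCast_zmod_val _, ZMod.val_lt _⟩
  obtain hlt | heq := Nat.lt_succ_iff_lt_or_eq.1 hsn
  · have := pp_mul_pp_sub hlt i
    rwa [show i - (s + 2) = j by rw [hs]; ring] at this
  · rw [heq, ZMod.natCast_self_eq_neg_one] at hs
    rw [show j = i - 1 by linear_combination hs, sub_add_cancel]

/-- In `Ãₙ`, the cyclic products satisfy `pᵢpⱼ = p_{j+1}p_{i−1}` (indices mod `n+1`). -/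
theorem stmt6 (n : ℕ) (hn : 2 ≤ n) (i j : ZMod (n + 1)) :
    pp n i * pp n j = pp n (j + 1) * pp n (i - 1) :=
  stmt6_general n i j
end

section
/- In Ãₙ, let Δ = a_p a_{p+1} ⋯ a_k be a consecutive product of generators with p < k ≤ n. Then: Δgⱼ = g_{j+1}Δ if p ≤ j < k; Δg_k = g_p⁻¹g_{p+1}⁻¹⋯g_k⁻¹Δ; gⱼΔ = Δg_{j−1} if p < j ≤ k; g_pΔ = Δg_p⁻¹⋯g_k⁻¹; and gⱼΔ = Δgⱼ if j < p−1 or j > k+1. -/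
open CoxeterMatrix

/-!
Write `P = pⱼ = aⱼ₊₁ ⋯ aⱼ₋₁`. Conjugation by `P` shifts the letters of `P` down by one
(`aᵢ₊₁ P = P aᵢ`), and `pⱼ₊₁ = aⱼ₊₁ pⱼ aⱼ`; together these give the local relations between the
generators and the `gⱼ`. For the commutation of `gⱼ` and `gⱼ₊₁`, let `x = aⱼ`, `y = aⱼ₊₁` and let
`Z` be the reflection in the root `αⱼ₊₂ + ⋯ + αⱼ₋₁`. Then `gⱼ = (yZy)x` and `gⱼ₊₁ = (xZx)y`, and
`x, y, Z` are involutions satisfying the braid relations of `Ã₂`, which already force these two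
elements to commute; conjugating by generators then makes all the `gⱼ` commute. The relations for
`Δ` follow by moving `gⱼ` through `Δ` one letter at a time.
-/

section ConsecProd

variable {R M : Type*} [AddCommMonoidWithOne R] [Monoid M]

def consecProd (f : R → M) (i : R) (m : ℕ) : M :=
  ((List.range m).map fun t : ℕ => f (i + t)).prod

@[simp]
lemma consecProd_zero (f : R → M) (i : R) : consecProd f i 0 = 1 := rfl

lemma consecProd_succ (f : R → M) (i : R) (m : ℕ) :
    consecProd f i (m + 1) = f i * consecProd f (i + 1) m := by
  simp only [consecProd, List.prod_range_succ', Nat.cast_zero, add_zero, Nat.cast_succ]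
  congr 3 with t
  rw [add_comm (t : R), add_assoc]

lemma consecProd_add (f : R → M) (i : R) (m m' : ℕ) :
    consecProd f i (m + m') = consecProd f i m * consecProd f (i + m) m' := by
  induction m generalizing i with
  | zero => simp
  | succ m ih =>
    rw [Nat.add_right_comm, consecProd_succ, ih, consecProd_succ, mul_assoc, Nat.cast_succ,
      add_right_comm, add_assoc]

lemma consecProd_one (f : R → M) (i : R) : consecProd f i 1 = f i := by
  simp [consecProd]

lemma commute_consecProd {f : R → M} {x : M} {i : R} {m : ℕ}
    (h : ∀ t < m, Commute x (f (i + t))) : Commute x (consecProd f i m) :=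
  Commute.list_prod_right _ _ fun y hy => by
    obtain ⟨t, ht, rfl⟩ := List.mem_map.1 hy
    exact h t (List.mem_range.1 ht)

end ConsecProd

section Braid

variable {G : Type*} [Group G] {x y z u : G}

lemma braid_conj_of_commute (hxu : Commute x u) (h : x * y * x = y * x * y) :
    x * (u⁻¹ * y * u) * x = u⁻¹ * y * u * x * (u⁻¹ * y * u) := by
  have hx : MulAut.conj u⁻¹ x = x := by simp [mul_assoc, hxu.eq]
  have hy : MulAut.conj u⁻¹ y = u⁻¹ * y * u := by simp
  rw [← hy, ← hx, ← map_mul, ← map_mul, h, map_mul, map_mul]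

lemma commute_of_braid (hx : x * x = 1) (hy : y * y = 1) (hz : z * z = 1)
    (hxy : x * y * x = y * x * y) (hyz : y * z * y = z * y * z) (hzx : z * x * z = x * z * x) :
    Commute (y * z * y * x) (x * z * x * y) := by
  have hl : y * z * y * x * (x * z * x * y) = z * (y * x * y) := by
    calc y * z * y * x * (x * z * x * y) = (y * z * y) * z * (x * y) := by
          simp only [mul_assoc, ← mul_assoc x x, hx, one_mul]
      _ = z * (y * x * y) := by rw [hyz]; simp only [mul_assoc, hz, one_mul]
  have hr : x * z * x * y * (y * z * y * x) = z * (x * y * x) := by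
    calc x * z * x * y * (y * z * y * x) = (x * z * x) * z * (y * x) := by
          simp only [mul_assoc, ← mul_assoc y y, hy, one_mul]
      _ = z * (x * y * x) := by rw [← hzx]; simp only [mul_assoc, hz, one_mul]
  rw [Commute, SemiconjBy, hl, hr, hxy]

end Braid

namespace AffineA

variable {n : ℕ}

lemma natCast_ne_zero_of_lt {d : ℕ} (hd0 : 0 < d) (hd : d < n + 1) :
    (d : ZMod (n + 1)) ≠ 0 := by
  rw [Ne, ZMod.natCast_eq_zero_iff]
  exact fun h => (Nat.eq_zero_of_dvd_of_lt h hd).not_gt hd0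

lemma natCast_add_one_eq_zero : (n : ZMod (n + 1)) + 1 = 0 := by
  exact_mod_cast ZMod.natCast_self (n + 1)

lemma aa_mul_self (i : ZMod (n + 1)) : aa n i * aa n i = 1 :=
  (affineA n).toCoxeterSystem.simple_mul_simple_self i

lemma aa_inv (i : ZMod (n + 1)) : (aa n i)⁻¹ = aa n i :=
  (affineA n).toCoxeterSystem.inv_simple i

@[simp]
lemma aa_mul_aa_mul (i : ZMod (n + 1)) (x : (affineA n).Group) : aa n i * (aa n i * x) = x :=
  (affineA n).toCoxeterSystem.simple_mul_simple_cancel_left i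

lemma aa_mul_aa_pow (i i' : ZMod (n + 1)) : (aa n i * aa n i') ^ affineA n i i' = 1 :=
  (affineA n).toCoxeterSystem.simple_mul_simple_pow i i'

lemma aa_braid (hn : 1 ≤ n) (i : ZMod (n + 1)) :
    aa n i * aa n (i + 1) * aa n i = aa n (i + 1) * aa n i * aa n (i + 1) := by
  have hne : i ≠ i + 1 := by
    simpa [eq_comm] using natCast_ne_zero_of_lt (n := n) one_pos (by omega)
  have h := aa_mul_aa_pow i (i + 1)
  rw [show affineA n i (i + 1) = 3 by simp [affineA, hne], pow_succ, pow_succ, pow_one] at h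
  rw [eq_inv_of_mul_eq_one_left (a := aa n i * aa n (i + 1) * aa n i)
    (by simpa [mul_assoc] using h)]
  simp [mul_inv_rev, aa_inv, mul_assoc]

lemma commute_aa_aa {i i' : ZMod (n + 1)} {d : ℕ} (h : i' = i + d) (hd : 2 ≤ d) (hdn : d < n) :
    Commute (aa n i) (aa n i') := by
  subst h
  have h0 := natCast_ne_zero_of_lt (n := n) (d := d) (by omega) (by omega)
  have h1 : (d : ZMod (n + 1)) ≠ 1 := fun h1 =>
    natCast_ne_zero_of_lt (n := n) (d := d - 1) (by omega) (by omega)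
      (by rw [Nat.cast_sub (by omega), h1, Nat.cast_one, sub_self])
  have h2 := natCast_ne_zero_of_lt (n := n) (d := d + 1) (by omega) (by omega)
  push_cast at h2
  have h := aa_mul_aa_pow i (i + d)
  rw [show affineA n i (i + d) = 2 by simp [affineA, h0, h1, h2, add_assoc], pow_two] at h
  change _ * _ = _ * _
  rw [eq_inv_of_mul_eq_one_left h, mul_inv_rev, aa_inv, aa_inv]

lemma aa_mul_consecProd (b : ZMod (n + 1)) {i m : ℕ} (him : i + 2 ≤ m) (hm : m ≤ n) :
    aa n (b + (i + 1 : ℕ)) * consecProd (aa n) b m = consecProd (aa n) b m * aa n (b + i) := by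
  obtain ⟨r, rfl⟩ : ∃ r, m = i + (r + 1 + 1) := ⟨m - i - 2, by omega⟩
  rw [consecProd_add, consecProd_succ, consecProd_succ, Nat.cast_succ, ← add_assoc]
  set x := aa n (b + i)
  set y := aa n (b + i + 1)
  have hyP : Commute y (consecProd (aa n) b i) := commute_consecProd fun t ht =>
    (commute_aa_aa (d := i + 1 - t) (by rw [Nat.cast_sub (by omega)]; push_cast; ring) (by omega)
      (by omega)).symm
  have hxQ : Commute x (consecProd (aa n) (b + i + 1 + 1) r) := commute_consecProd fun t ht =>
    commute_aa_aa (i := b + (i : ZMod (n + 1))) (d := t + 2) (by push_cast; ring) (by omega)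
      (by omega)
  have hbraid : y * x * y = x * y * x := (aa_braid (by omega) _).symm
  calc y * (consecProd (aa n) b i * (x * (y * consecProd (aa n) (b + i + 1 + 1) r)))
      = consecProd (aa n) b i * ((y * x * y) * consecProd (aa n) (b + i + 1 + 1) r) := by
        rw [← mul_assoc, hyP.eq]; simp only [mul_assoc]
    _ = consecProd (aa n) b i * (x * (y * consecProd (aa n) (b + i + 1 + 1) r)) * x := by
        rw [hbraid]; simp only [mul_assoc, hxQ.eq]

lemma pp_eq_consecProd (j : ZMod (n + 1)) : pp n j = consecProd (aa n) (j + 1) n := rfl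

lemma pp_add_one (hn : 1 ≤ n) (j : ZMod (n + 1)) :
    pp n (j + 1) = aa n (j + 1) * pp n j * aa n j := by
  obtain ⟨m, rfl⟩ : ∃ m, n = m + 1 := ⟨n - 1, by omega⟩
  have hlast : j + 1 + 1 + (m : ZMod (m + 1 + 1)) = j := by
    have h := natCast_add_one_eq_zero (n := m + 1)
    push_cast at h
    linear_combination h
  rw [pp_eq_consecProd, pp_eq_consecProd, consecProd_succ _ (j + 1) m,
    consecProd_add _ (j + 1 + 1) m 1, consecProd_one, hlast, mul_assoc, mul_assoc, aa_mul_aa_mul]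

lemma aa_mul_pp (j : ZMod (n + 1)) {d : ℕ} (hd : 1 ≤ d) (hdn : d < n) :
    aa n (j + d + 1) * pp n j = pp n j * aa n (j + d) := by
  have h := aa_mul_consecProd (n := n) (j + 1) (i := d - 1) (m := n) (by omega) le_rfl
  rwa [Nat.sub_add_cancel hd, Nat.cast_sub hd, Nat.cast_one, add_add_sub_cancel,
    add_right_comm, ← pp_eq_consecProd] at h

lemma gg_eq (hn : 1 ≤ n) (j : ZMod (n + 1)) :
    gg n j = (pp n j)⁻¹ * aa n (j + 1) * pp n j * aa n j := by
  rw [gg, pp_add_one hn]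
  simp only [mul_assoc]

lemma aa_mul_gg_self (hn : 1 ≤ n) (j : ZMod (n + 1)) :
    aa n j * gg n j = (gg n j)⁻¹ * aa n j := by
  simp [gg_eq hn, aa_inv, mul_assoc]

lemma gg_mul_gg_add_one (j : ZMod (n + 1)) :
    gg n j * gg n (j + 1) = (pp n j)⁻¹ * pp n (j + 1 + 1) := by
  simp [gg, mul_assoc]

lemma aa_add_one_mul_gg (hn : 2 ≤ n) (j : ZMod (n + 1)) :
    aa n (j + 1) * gg n j = gg n j * gg n (j + 1) * aa n (j + 1) := by
  have h := aa_mul_pp (n := n) j (d := 1) le_rfl (by omega)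
  rw [Nat.cast_one] at h
  have h' : aa n (j + 1) * (pp n j)⁻¹ = (pp n j)⁻¹ * aa n (j + 1 + 1) := by
    rw [eq_inv_mul_iff_mul_eq, ← mul_assoc, ← h, mul_inv_cancel_right]
  rw [gg_mul_gg_add_one, gg, ← mul_assoc, h', pp_add_one (by omega) (j + 1)]
  simp [mul_assoc, aa_mul_self]

lemma aa_mul_gg_add_one (hn : 2 ≤ n) (j : ZMod (n + 1)) :
    aa n j * gg n (j + 1) = gg n j * gg n (j + 1) * aa n j := by
  have h := aa_mul_pp (n := n) (j + 1 + 1) (d := n - 1) (by omega) (by omega)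
  have e : j + 1 + 1 + ((n - 1 : ℕ) : ZMod (n + 1)) = j := by
    rw [Nat.cast_sub (by omega)]
    linear_combination (natCast_add_one_eq_zero (n := n))
  rw [e] at h
  rw [gg_mul_gg_add_one, gg, pp_add_one (by omega) j]
  simp only [mul_inv_rev, aa_inv, mul_assoc, aa_mul_aa_mul, h]

lemma commute_aa_gg {x y : ZMod (n + 1)} {d : ℕ} (h : x = y + d) (hd : 2 ≤ d) (hdn : d < n) :
    Commute (aa n x) (gg n y) := by
  subst h
  have h₁ := aa_mul_pp (n := n) y (d := d) (by omega) hdn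
  have h₂ := aa_mul_pp (n := n) (y + 1) (d := d - 1) (by omega) (by omega)
  rw [Nat.cast_sub (by omega), Nat.cast_one, add_add_sub_cancel] at h₂
  have h₁' : aa n (y + d) * (pp n y)⁻¹ = (pp n y)⁻¹ * aa n (y + d + 1) := by
    rw [eq_inv_mul_iff_mul_eq, ← mul_assoc, ← h₁, mul_inv_cancel_right]
  change _ * (_ * _) = (_ * _) * _
  rw [← mul_assoc, h₁', mul_assoc, h₂, mul_assoc]

lemma commute_aa_gg' {x y : ZMod (n + 1)} {d : ℕ} (h : y = x + d) (hd : 2 ≤ d) (hdn : d < n) :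
    Commute (aa n x) (gg n y) :=
  commute_aa_gg (d := n + 1 - d) (by
    rw [h, Nat.cast_sub (by omega)]
    push_cast
    linear_combination -natCast_add_one_eq_zero (n := n)) (by omega) (by omega)

lemma gg_mul_aa_self (hn : 1 ≤ n) (j : ZMod (n + 1)) : gg n j * aa n j = aa n j * (gg n j)⁻¹ :=
  calc gg n j * aa n j = gg n j * (aa n j * gg n j) * (gg n j)⁻¹ := by group
    _ = aa n j * (gg n j)⁻¹ := by rw [aa_mul_gg_self hn]; group

lemma gg_inv_mul_aa_add_one (hn : 2 ≤ n) (j : ZMod (n + 1)) :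
    (gg n j)⁻¹ * aa n (j + 1) = gg n (j + 1) * aa n (j + 1) * (gg n j)⁻¹ :=
  calc (gg n j)⁻¹ * aa n (j + 1)
      = (gg n j)⁻¹ * (aa n (j + 1) * gg n j) * (gg n j)⁻¹ := by group
    _ = _ := by rw [aa_add_one_mul_gg hn]; group

lemma aa_mul_gg_add_one_inv (hn : 2 ≤ n) (j : ZMod (n + 1)) :
    aa n j * (gg n (j + 1))⁻¹ = (gg n (j + 1))⁻¹ * (gg n j)⁻¹ * aa n j :=
  calc aa n j * (gg n (j + 1))⁻¹
      = (gg n (j + 1))⁻¹ * (gg n j)⁻¹ * (gg n j * gg n (j + 1) * aa n j) *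
          (gg n (j + 1))⁻¹ := by group
    _ = _ := by rw [← aa_mul_gg_add_one hn]; group

lemma aa_mul_aa_mul_gg (hn : 2 ≤ n) (j : ZMod (n + 1)) :
    aa n j * aa n (j + 1) * gg n j = gg n (j + 1) * (aa n j * aa n (j + 1)) := by
  rw [mul_assoc, aa_add_one_mul_gg hn, ← mul_assoc, ← mul_assoc, aa_mul_gg_self (by omega),
    mul_assoc _ (aa n j), aa_mul_gg_add_one hn]
  group

/-- The reflection in the root `α_b + α_{b+1} + ⋯ + α_{b+m}`. -/
def rootRefl (b : ZMod (n + 1)) (m : ℕ) : (affineA n).Group :=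
  (consecProd (aa n) (b + 1) m)⁻¹ * aa n b * consecProd (aa n) (b + 1) m

lemma rootRefl_mul_self (b : ZMod (n + 1)) (m : ℕ) : rootRefl b m * rootRefl b m = 1 := by
  simp [rootRefl, mul_assoc]

lemma rootRefl_inv (b : ZMod (n + 1)) (m : ℕ) : (rootRefl b m)⁻¹ = rootRefl b m :=
  inv_eq_of_mul_eq_one_right (rootRefl_mul_self b m)

lemma commute_aa_consecProd_add_two (b : ZMod (n + 1)) {m : ℕ} (hm : m + 2 ≤ n) :
    Commute (aa n b) (consecProd (aa n) (b + 1 + 1) m) :=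
  commute_consecProd fun t ht => commute_aa_aa (d := t + 2) (by push_cast; ring) le_add_self
    (by omega)

lemma rootRefl_succ (b : ZMod (n + 1)) {m : ℕ} (hm : m + 2 ≤ n) :
    rootRefl b (m + 1) = aa n b * rootRefl (b + 1) m * aa n b := by
  have hc := commute_aa_consecProd_add_two b hm
  have hbraid := aa_braid (n := n) (by omega) b
  rw [rootRefl, rootRefl, consecProd_succ, mul_inv_rev, aa_inv]
  calc _ = (consecProd (aa n) (b + 1 + 1) m)⁻¹ * (aa n (b + 1) * aa n b * aa n (b + 1))
        * consecProd (aa n) (b + 1 + 1) m := by simp only [mul_assoc]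
    _ = _ := by
      rw [← hbraid]
      simp only [mul_assoc, ← hc.eq]
      simp only [← mul_assoc, hc.inv_right.eq]

lemma aa_braid_rootRefl (b : ZMod (n + 1)) {m : ℕ} (hm : m + 2 ≤ n) :
    aa n b * rootRefl (b + 1) m * aa n b = rootRefl (b + 1) m * aa n b * rootRefl (b + 1) m :=
  braid_conj_of_commute (commute_aa_consecProd_add_two b hm) (aa_braid (by omega) b)

lemma rootRefl_braid_aa {b c : ZMod (n + 1)} {m : ℕ} (hc : c = b + m + 1) (hm : m + 2 ≤ n) :
    rootRefl b m * aa n c * rootRefl b m = aa n c * rootRefl b m * aa n c := by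
  subst hc
  induction m generalizing b with
  | zero => simpa [rootRefl] using aa_braid (n := n) (by omega) b
  | succ m ih =>
    have hcomm : Commute (aa n (b + (m + 1 : ℕ) + 1)) (aa n b) :=
      (commute_aa_aa (d := m + 2) (by push_cast; ring) le_add_self (by omega)).symm
    have ih' := ih (b := b + 1) (by omega)
    rw [show b + 1 + (m : ZMod (n + 1)) + 1 = b + (m + 1 : ℕ) + 1 by push_cast; ring] at ih'
    have h := braid_conj_of_commute hcomm ih'.symm
    rw [aa_inv] at h
    rw [rootRefl_succ b (by omega)]
    exact h.symm

lemma gg_eq_rootRefl (hn : 2 ≤ n) (j : ZMod (n + 1)) :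
    gg n j = aa n (j + 1) * rootRefl (j + 1 + 1) (n - 2) * aa n (j + 1) * aa n j := by
  have hY : (pp n j)⁻¹ * aa n (j + 1) * pp n j = rootRefl (j + 1) (n - 2 + 1) := by
    have e : consecProd (aa n) (j + 1) n =
        aa n (j + 1) * consecProd (aa n) (j + 1 + 1) (n - 2 + 1) := by
      rw [← consecProd_succ]; congr 1; omega
    simp [pp_eq_consecProd, e, rootRefl, mul_assoc]
  rw [gg_eq (by omega), hY, rootRefl_succ _ (by omega)]

lemma gg_add_one_eq_rootRefl (hn : 2 ≤ n) (j : ZMod (n + 1)) :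
    gg n (j + 1) = aa n j * rootRefl (j + 1 + 1) (n - 2) * aa n j * aa n (j + 1) := by
  have h : gg n (j + 1) = (gg n j)⁻¹ * aa n (j + 1) * gg n j * aa n (j + 1) := by
    rw [mul_assoc _ _ (gg n j), aa_add_one_mul_gg hn]
    simp [mul_assoc, aa_mul_self]
  have hcancel : ∀ w, aa n (j + 1) * (rootRefl (j + 1 + 1) (n - 2) * (aa n (j + 1) *
      (rootRefl (j + 1 + 1) (n - 2) * (aa n (j + 1) * w)))) = rootRefl (j + 1 + 1) (n - 2) * w :=
    fun w => by
      rw [← mul_assoc (rootRefl _ _), ← mul_assoc (aa n (j + 1)), ← mul_assoc (aa n (j + 1)),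
        aa_braid_rootRefl (j + 1) (by omega)]
      simp [mul_assoc, ← mul_assoc (rootRefl _ _) (rootRefl _ _), rootRefl_mul_self]
  rw [h, gg_eq_rootRefl hn]
  simp only [mul_inv_rev, aa_inv, rootRefl_inv, mul_assoc, aa_mul_aa_mul, hcancel]

lemma commute_gg_add_one (hn : 2 ≤ n) (j : ZMod (n + 1)) : Commute (gg n j) (gg n (j + 1)) := by
  rw [gg_eq_rootRefl hn, gg_add_one_eq_rootRefl hn]
  refine commute_of_braid (aa_mul_self j) (aa_mul_self (j + 1)) (rootRefl_mul_self _ _)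
    (aa_braid (by omega) j) (aa_braid_rootRefl (j + 1) (by omega))
    (rootRefl_braid_aa ?_ (by omega))
  rw [Nat.cast_sub hn]
  linear_combination -natCast_add_one_eq_zero (n := n)

lemma commute_gg_add (hn : 2 ≤ n) (i : ZMod (n + 1)) {d : ℕ} (hd : d < n) :
    Commute (gg n i) (gg n (i + d)) := by
  induction d with
  | zero => simp
  | succ d ih =>
    rcases Nat.eq_zero_or_pos d with rfl | hd0
    · simpa using commute_gg_add_one hn i
    have hprod : gg n (i + d) * gg n (i + d + 1) =
        aa n (i + d + 1) * gg n (i + d) * aa n (i + d + 1) := by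
      rw [aa_add_one_mul_gg hn, mul_assoc, aa_mul_self, mul_one]
    have ha : Commute (gg n i) (aa n (i + d + 1)) :=
      (commute_aa_gg (d := d + 1) (by push_cast; ring) (by omega) hd).symm
    have h : Commute (gg n i) (gg n (i + d) * gg n (i + d + 1)) := by
      rw [hprod]
      exact (ha.mul_right (ih (by omega))).mul_right ha
    have h' := (ih (by omega)).inv_right.mul_right h
    rw [inv_mul_cancel_left] at h'
    rwa [Nat.cast_succ, ← add_assoc]

lemma commute_gg (hn : 2 ≤ n) (i j : ZMod (n + 1)) : Commute (gg n i) (gg n j) := by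
  obtain ⟨d, hd, rfl⟩ : ∃ d < n + 1, j = i + d :=
    ⟨(j - i).val, ZMod.val_lt _, by rw [ZMod.natCast_zmod_val]; ring⟩
  rcases Nat.lt_succ_iff_lt_or_eq.1 hd with hd | hd
  · exact commute_gg_add hn i hd
  · rw [hd]
    have e : i = i + n + 1 := by linear_combination -natCast_add_one_eq_zero (n := n)
    have := (commute_gg_add_one hn (i + n)).symm
    rwa [← e] at this

lemma consecProd_mul_gg (i : ZMod (n + 1)) {s m : ℕ} (hs : s + 1 < m) (hm : m ≤ n) :
    consecProd (aa n) i m * gg n (i + s) = gg n (i + s + 1) * consecProd (aa n) i m := by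
  obtain ⟨r, rfl⟩ : ∃ r, m = s + (r + 1 + 1) := ⟨m - s - 2, by omega⟩
  have hQ : Commute (gg n (i + s)) (consecProd (aa n) (i + s + 1 + 1) r) :=
    commute_consecProd fun t ht =>
      (commute_aa_gg (d := t + 2) (by push_cast; ring) le_add_self (by omega)).symm
  have hP : Commute (gg n (i + s + 1)) (consecProd (aa n) i s) :=
    commute_consecProd fun t ht =>
      (commute_aa_gg' (d := s + 1 - t) (by rw [Nat.cast_sub (by omega)]; push_cast; ring)
        (by omega) (by omega)).symm
  rw [consecProd_add, consecProd_succ, consecProd_succ]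
  calc _ = consecProd (aa n) i s * (aa n (i + s) * aa n (i + s + 1) * gg n (i + s)) *
        consecProd (aa n) (i + s + 1 + 1) r := by simp only [mul_assoc, hQ.eq]
    _ = _ := by rw [aa_mul_aa_mul_gg (by omega)]; simp only [← mul_assoc, hP.eq]

lemma consecProd_mul_gg_last (i : ZMod (n + 1)) {m : ℕ} (hm : m < n) :
    consecProd (aa n) i (m + 1) * gg n (i + m) =
      consecProd (fun j => (gg n j)⁻¹) i (m + 1) * consecProd (aa n) i (m + 1) := by
  induction m generalizing i with
  | zero => simpa [consecProd_one] using aa_mul_gg_self (by omega) i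
  | succ m ih =>
    have hcomm : Commute (aa n i) (consecProd (fun j => (gg n j)⁻¹) (i + 1 + 1) m) :=
      commute_consecProd fun t ht =>
        (commute_aa_gg' (d := t + 2) (by push_cast; ring) le_add_self (by omega)).inv_right
    have ih' := ih (i + 1) (by omega)
    rw [show i + 1 + (m : ZMod (n + 1)) = i + (m + 1 : ℕ) by push_cast; ring] at ih'
    calc consecProd (aa n) i (m + 1 + 1) * gg n (i + (m + 1 : ℕ))
        = aa n i * (consecProd (fun j => (gg n j)⁻¹) (i + 1) (m + 1) *
            consecProd (aa n) (i + 1) (m + 1)) := by rw [consecProd_succ, mul_assoc, ih']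
      _ = (aa n i * (gg n (i + 1))⁻¹) * consecProd (fun j => (gg n j)⁻¹) (i + 1 + 1) m *
            consecProd (aa n) (i + 1) (m + 1) := by
          rw [consecProd_succ (fun j => (gg n j)⁻¹) (i + 1) m]; simp only [mul_assoc]
      _ = (gg n i)⁻¹ * (gg n (i + 1))⁻¹ * consecProd (fun j => (gg n j)⁻¹) (i + 1 + 1) m *
            (aa n i * consecProd (aa n) (i + 1) (m + 1)) := by
          rw [aa_mul_gg_add_one_inv (by omega), ((commute_gg (by omega) i (i + 1)).inv_inv).eq]
          simp only [mul_assoc, hcomm.eq]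
      _ = _ := by
          rw [consecProd_succ (aa n) i (m + 1), consecProd_succ (fun j => (gg n j)⁻¹) i (m + 1),
            consecProd_succ (fun j => (gg n j)⁻¹) (i + 1) m]
          simp only [mul_assoc]

lemma gg_mul_consecProd (i : ZMod (n + 1)) {m : ℕ} (hm : m < n) :
    gg n i * consecProd (aa n) i (m + 1) =
      consecProd (aa n) i (m + 1) * consecProd (fun j => (gg n j)⁻¹) i (m + 1) := by
  induction m generalizing i with
  | zero => simpa [consecProd_one] using gg_mul_aa_self (by omega) i
  | succ m ih =>
    have hcomm : Commute (gg n i)⁻¹ (consecProd (aa n) (i + 1 + 1) m) :=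
      commute_consecProd fun t ht =>
        (commute_aa_gg (d := t + 2) (by push_cast; ring) le_add_self (by omega)).symm.inv_left
    have hcomm' : Commute (gg n i)⁻¹ (consecProd (fun j => (gg n j)⁻¹) (i + 1) (m + 1)) :=
      commute_consecProd fun t _ => (commute_gg (by omega) _ _).inv_inv
    calc gg n i * consecProd (aa n) i (m + 1 + 1)
        = aa n i * ((gg n i)⁻¹ * aa n (i + 1) * consecProd (aa n) (i + 1 + 1) m) := by
          rw [consecProd_succ, consecProd_succ, ← mul_assoc, gg_mul_aa_self (by omega)]
          simp only [mul_assoc]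
      _ = aa n i * (gg n (i + 1) * consecProd (aa n) (i + 1) (m + 1) * (gg n i)⁻¹) := by
          rw [gg_inv_mul_aa_add_one (by omega), consecProd_succ]
          simp only [mul_assoc, hcomm.eq]
      _ = _ := by
          rw [ih (i + 1) (by omega), mul_assoc _ _ (gg n i)⁻¹, ← hcomm'.eq,
            consecProd_succ (aa n) i (m + 1), consecProd_succ (fun j => (gg n j)⁻¹) i (m + 1)]
          simp only [mul_assoc]

end AffineA

open AffineA in
theorem stmt12_general (n p k : ℕ) (hp : 1 ≤ p) (hpk : p < k) (hk : k ≤ n)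
    (Δ G' : (affineA n).Group)
    (hΔ : Δ = ((List.range (k - p + 1)).map fun t => aa n ((p + t : ℕ))).prod)
    (hG' : G' = ((List.range (k - p + 1)).map fun t => (gg n ((p + t : ℕ)))⁻¹).prod) :
    (∀ j : ℕ, p ≤ j → j < k → Δ * gg n (j : ZMod (n + 1)) = gg n ((j + 1 : ℕ)) * Δ) ∧
    (Δ * gg n (k : ZMod (n + 1)) = G' * Δ) ∧
    (∀ j : ℕ, p < j → j ≤ k → gg n (j : ZMod (n + 1)) * Δ = Δ * gg n ((j : ZMod (n + 1)) - 1)) ∧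
    (gg n (p : ZMod (n + 1)) * Δ = Δ * G') ∧
    (∀ j : ℕ, 1 ≤ j → j ≤ n → (j + 1 < p ∨ k + 1 < j) →
      gg n (j : ZMod (n + 1)) * Δ = Δ * gg n (j : ZMod (n + 1))) := by
  obtain rfl : Δ = consecProd (aa n) (p : ZMod (n + 1)) (k - p + 1) :=
    hΔ.trans (by simp only [consecProd, Nat.cast_add])
  obtain rfl : G' = consecProd (fun j => (gg n j)⁻¹) (p : ZMod (n + 1)) (k - p + 1) :=
    hG'.trans (by simp only [consecProd, Nat.cast_add])
  have hcast : ∀ a b : ℕ, a ≤ b → (b : ZMod (n + 1)) = a + (b - a : ℕ) := fun a b hab => by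
    rw [← Nat.cast_add, Nat.add_sub_cancel' hab]
  refine ⟨fun j hpj hjk => ?_, ?_, fun j hpj hjk => ?_, ?_, fun j hj1 hjn hfar => ?_⟩
  · rw [Nat.cast_succ, hcast p j hpj]
    exact consecProd_mul_gg p (by omega) (by omega)
  · rw [hcast p k hpk.le]
    exact consecProd_mul_gg_last p (by omega)
  · rw [show (j : ZMod (n + 1)) = p + (j - 1 - p : ℕ) + 1 by
      rw [← Nat.cast_add, ← Nat.cast_succ]; congr 1; omega, add_sub_cancel_right]
    exact (consecProd_mul_gg p (by omega) (by omega)).symm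
  · exact gg_mul_consecProd p (by omega)
  · refine (commute_consecProd fun t ht => Commute.symm ?_).eq
    rcases hfar with hfar | hfar
    · exact commute_aa_gg (d := p + t - j) (by rw [← Nat.cast_add, hcast j (p + t) (by omega)])
        (by omega) (by omega)
    · exact commute_aa_gg' (d := j - (p + t))
        (by rw [← Nat.cast_add, hcast (p + t) j (by omega)]) (by omega) (by omega)

/-- Commutation relations between an echelon block `Δ = a_p a_{p+1} ⋯ a_k` (`p < k ≤ n`)
and the elements `gⱼ`. -/
theorem stmt12 (n p k : ℕ) (hn : 2 ≤ n) (hp : 1 ≤ p) (hpk : p < k) (hk : k ≤ n)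
    (Δ G' : (affineA n).Group)
    (hΔ : Δ = ((List.range (k - p + 1)).map fun t => aa n ((p + t : ℕ))).prod)
    (hG' : G' = ((List.range (k - p + 1)).map fun t => (gg n ((p + t : ℕ)))⁻¹).prod) :
    (∀ j : ℕ, p ≤ j → j < k → Δ * gg n (j : ZMod (n + 1)) = gg n ((j + 1 : ℕ)) * Δ) ∧
    (Δ * gg n (k : ZMod (n + 1)) = G' * Δ) ∧
    (∀ j : ℕ, p < j → j ≤ k → gg n (j : ZMod (n + 1)) * Δ = Δ * gg n ((j : ZMod (n + 1)) - 1)) ∧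
    (gg n (p : ZMod (n + 1)) * Δ = Δ * G') ∧
    (∀ j : ℕ, 1 ≤ j → j ≤ n → (j + 1 < p ∨ k + 1 < j) →
      gg n (j : ZMod (n + 1)) * Δ = Δ * gg n (j : ZMod (n + 1))) :=
  stmt12_general n p k hp hpk hk Δ G' hΔ hG'
end
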